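/- arXiv:2508.14044 — 2 statements merged into one kernel-verified Lean document; each statement's English description precedes it below -/
import Mathlib

section
/- Let (omega,theta,nu,phi) and (omega',theta',nu',phi') be two infinitesimal deformations of a matched pair of 3-Lie algebras (g,h,rho,psi) which are equivalent via linear maps f : g -> g and g' : h -> h (i.e. (id_g + t f, id_h + t g') is a morphism of matched pairs over k[t]/(t^2) from the first deformed matched pair to the second). Then (omega,theta,nu,phi) - (omega',theta',nu',phi') = D1(f,g'), where D1 is the differential on 1-cochains with coefficients in the adjoint representation; in particular the two 2-cocycles are cohomologous. -/
/-- A 3-Lie algebra over `k`: an alternating trilinear bracket satisfying the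
fundamental (Jacobi/Filippov) identity. -/
structure ThreeLie (k : Type*) (g : Type*) [CommRing k] [AddCommGroup g] [Module k g] where
  br : g →ₗ[k] g →ₗ[k] g →ₗ[k] g
  alt₁ : ∀ x y, br x x y = 0
  alt₂ : ∀ x y, br x y y = 0
  fund : ∀ x1 x2 y1 y2 y3,
    br x1 x2 (br y1 y2 y3) =
      br (br x1 x2 y1) y2 y3 + br y1 (br x1 x2 y2) y3 + br y1 y2 (br x1 x2 y3)

/-- A representation of a 3-Lie algebra `(g, L)` on a module `V`. -/
structure Rep3 (k : Type*) (g V : Type*) [CommRing k] [AddCommGroup g] [Module k g]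
    [AddCommGroup V] [Module k V] (L : ThreeLie k g) where
  ρ : g →ₗ[k] g →ₗ[k] Module.End k V
  skew : ∀ x, ρ x x = 0
  rep1 : ∀ x1 x2 x3 x4 v, ρ x1 x2 (ρ x3 x4 v) =
    ρ x3 x4 (ρ x1 x2 v) + ρ (L.br x1 x2 x3) x4 v + ρ x3 (L.br x1 x2 x4) v
  rep2 : ∀ x1 x2 x3 x4 v, ρ (L.br x1 x2 x3) x4 v =
    ρ x1 x2 (ρ x3 x4 v) + ρ x2 x3 (ρ x1 x4 v) + ρ x3 x1 (ρ x2 x4 v)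

/-- A matched pair of 3-Lie algebras `(g, h, ρ, ψ)`. -/
structure MatchedPair (k : Type*) (g h : Type*) [CommRing k] [AddCommGroup g] [Module k g]
    [AddCommGroup h] [Module k h] where
  Lg : ThreeLie k g
  Lh : ThreeLie k h
  ρ : Rep3 k g h Lg
  ψ : Rep3 k h g Lh
  mp1 : ∀ a4 a5 x1 x2 x3, ψ.ρ a4 a5 (Lg.br x1 x2 x3) =
    Lg.br (ψ.ρ a4 a5 x1) x2 x3 + Lg.br x1 (ψ.ρ a4 a5 x2) x3 + Lg.br x1 x2 (ψ.ρ a4 a5 x3)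
  mp2 : ∀ x1 x2 x4 a3 a5, ψ.ρ (ρ.ρ x1 x2 a3) a5 x4 =
    ψ.ρ (ρ.ρ x1 x4 a5) a3 x2 - ψ.ρ (ρ.ρ x2 x4 a5) a3 x1 + Lg.br x1 x2 (ψ.ρ a3 a5 x4)
  mp3 : ∀ a2 a3 x1 x4 x5, Lg.br (ψ.ρ a2 a3 x1) x4 x5 =
    ψ.ρ a2 a3 (Lg.br x1 x4 x5) + ψ.ρ (ρ.ρ x4 x5 a2) a3 x1 + ψ.ρ a2 (ρ.ρ x4 x5 a3) x1
  mp4 : ∀ x4 x5 a1 a2 a3, ρ.ρ x4 x5 (Lh.br a1 a2 a3) =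
    Lh.br (ρ.ρ x4 x5 a1) a2 a3 + Lh.br a1 (ρ.ρ x4 x5 a2) a3 + Lh.br a1 a2 (ρ.ρ x4 x5 a3)
  mp5 : ∀ a1 a2 a4 x3 x5, ρ.ρ (ψ.ρ a1 a2 x3) x5 a4 =
    ρ.ρ (ψ.ρ a1 a4 x5) x3 a2 - ρ.ρ (ψ.ρ a2 a4 x5) x3 a1 + Lh.br a1 a2 (ρ.ρ x3 x5 a4)
  mp6 : ∀ x2 x3 a1 a4 a5, Lh.br (ρ.ρ x2 x3 a1) a4 a5 =
    ρ.ρ x2 x3 (Lh.br a1 a4 a5) + ρ.ρ (ψ.ρ a4 a5 x2) x3 a1 + ρ.ρ x2 (ψ.ρ a4 a5 x3) a1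

section MPRepSec

variable (k : Type*) (g h V W : Type*) [CommRing k]
  [AddCommGroup g] [Module k g] [AddCommGroup h] [Module k h]
  [AddCommGroup V] [Module k V] [AddCommGroup W] [Module k W]

/-- The raw data of a representation of a matched pair of 3-Lie algebras. -/
structure MPRepData where
  ρV : g →ₗ[k] g →ₗ[k] Module.End k V
  ψV : h →ₗ[k] h →ₗ[k] Module.End k V
  ρW : g →ₗ[k] g →ₗ[k] Module.End k W
  ψW : h →ₗ[k] h →ₗ[k] Module.End k W
  A : V →ₗ[k] g →ₗ[k] h →ₗ[k] W
  B : W →ₗ[k] h →ₗ[k] g →ₗ[k] V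

variable {k g h V W}

/-- A representation `(V, W, α, β)` of a matched pair of 3-Lie algebras
`(g, h, ρ, ψ)` (Definition 2.3 of arXiv:2508.14044). -/
structure MPRep (M : MatchedPair k g h) where
  rV : Rep3 k g V M.Lg
  pV : Rep3 k h V M.Lh
  rW : Rep3 k g W M.Lg
  pW : Rep3 k h W M.Lh
  A : V →ₗ[k] g →ₗ[k] h →ₗ[k] W
  B : W →ₗ[k] h →ₗ[k] g →ₗ[k] V
  iden1 : ∀ a1 a2 x2 x3 v1, pV.ρ a1 a2 (rV.ρ x2 x3 v1) =
    rV.ρ (M.ψ.ρ a1 a2 x2) x3 v1 + rV.ρ x2 (M.ψ.ρ a1 a2 x3) v1 + rV.ρ x2 x3 (pV.ρ a1 a2 v1)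
  iden2 : ∀ a1 a2 x1 x3 v2, pV.ρ a1 a2 (rV.ρ x1 x3 v2) =
    rV.ρ (M.ψ.ρ a1 a2 x1) x3 v2 + rV.ρ x1 (M.ψ.ρ a1 a2 x3) v2 + rV.ρ x1 x3 (pV.ρ a1 a2 v2)
  iden3 : ∀ a1 a2 x1 x2 v3, pV.ρ a1 a2 (rV.ρ x1 x2 v3) =
    rV.ρ (M.ψ.ρ a1 a2 x1) x2 v3 + rV.ρ x1 (M.ψ.ρ a1 a2 x2) v3 + rV.ρ x1 x2 (pV.ρ a1 a2 v3)
  iden4 : ∀ w1 w2 a1 a2 x1 x2 x3,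
    B w1 a2 (M.Lg.br x1 x2 x3) - B w2 a1 (M.Lg.br x1 x2 x3) =
      rV.ρ x2 x3 (B w1 a2 x1 - B w2 a1 x1) + rV.ρ x1 x3 (B w1 a2 x2 - B w2 a1 x2)
      + rV.ρ x1 x2 (B w1 a2 x3 - B w2 a1 x3)
  iden5 : ∀ x2 x3 a1 a2 v1, rV.ρ x2 (M.ψ.ρ a1 a2 x3) v1 = pV.ρ (M.ρ.ρ x2 x3 a2) a1 v1
  iden6 : ∀ x1 x3 a1 a2 v2, rV.ρ x1 (M.ψ.ρ a1 a2 x3) v2 = pV.ρ (M.ρ.ρ x1 x3 a2) a1 v2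
  iden7 : ∀ x1 x2 a1 a2 v3, rV.ρ x1 x2 (pV.ρ a1 a2 v3) = pV.ρ (M.ρ.ρ x1 x2 a1) a2 v3
  iden8 : ∀ x1 x2 x3 a1 a2 v1 v2 v3 w1 w2,
    rV.ρ x1 x2 (B w1 a2 x3 - B w2 a1 x3) =
      B (rW.ρ x2 x3 w2 + A v2 x3 a2 - A v3 x1 a2) a1 x1 - B w1 (M.ρ.ρ x2 x3 a2) x1
      - B (rW.ρ x1 x3 w2 + A v1 x3 a2 - A v3 x1 a2) a1 x2 + B w1 (M.ρ.ρ x1 x3 a2) x2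
      + B (rW.ρ x1 x2 w1 + A v1 x2 a1 - A v2 x1 a1) a2 x3 - B w2 (M.ρ.ρ x1 x2 a1) x3
  iden9 : ∀ x2 x3 a1 a2 v1, rV.ρ x2 x3 (pV.ρ a1 a2 v1) =
    pV.ρ a1 a2 (rV.ρ x2 x3 v1) + pV.ρ (M.ρ.ρ x2 x3 a1) a2 v1 + pV.ρ a1 (M.ρ.ρ x2 x3 a2) v1
  iden10 : ∀ x1 x2 x3 a1 a2 v2 v3 w1 w2,
    rV.ρ x2 x3 (B w1 a2 x1 - B w2 a1 x1) =
      (B w1 a2 (M.Lg.br x1 x2 x3) - B w2 a1 (M.Lg.br x1 x2 x3))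
      - B w2 (M.ρ.ρ x2 x3 a1) x1 + B w1 (M.ρ.ρ x2 x3 a2) x1
      + B (rW.ρ x2 x3 w1 + A v2 x3 a1 - A v3 x2 a1) a2 x1
      - B (rW.ρ x2 x2 w2 + A v2 x3 a2 - A v3 x2 a2) a1 x1
  iden11 : ∀ a1 a2 x1 x3 v2, rV.ρ (M.ψ.ρ a1 a2 x1) x3 v2 = pV.ρ a1 a2 (rV.ρ x1 x3 v2)
  iden12 : ∀ a1 a2 x1 x2 v3, rV.ρ (M.ψ.ρ a1 a2 x1) x2 v3 = pV.ρ a1 a2 (rV.ρ x1 x2 v3)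
  iden13 : ∀ x1 x2 a2 a3 w1, rW.ρ x1 x2 (pW.ρ a2 a3 w1) =
    pW.ρ (M.ρ.ρ x1 x2 a2) a3 w1 + pW.ρ a2 (M.ρ.ρ x1 x2 a3) w1 + pW.ρ a2 a3 (rW.ρ x1 x2 w1)
  iden14 : ∀ x1 x2 a1 a3 w2, rW.ρ x1 x2 (pW.ρ a1 a3 w2) =
    pW.ρ (M.ρ.ρ x1 x2 a1) a3 w2 + pW.ρ a1 (M.ρ.ρ x1 x2 a3) w2 + pW.ρ a1 a3 (rW.ρ x1 x2 w2)
  iden15 : ∀ x1 x2 a1 a2 w3, rW.ρ x1 x2 (pW.ρ a1 a2 w3) =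
    pW.ρ (M.ρ.ρ x1 x2 a1) a2 w3 + pW.ρ a1 (M.ρ.ρ x1 x2 a2) w3 + pW.ρ a1 a2 (rW.ρ x1 x2 w3)
  iden16 : ∀ v1 v2 x1 x2 a1 a2 a3,
    A v1 x2 (M.Lh.br a1 a2 a3) - A v2 x1 (M.Lh.br a1 a2 a3) =
      pW.ρ a2 a3 (A v1 x2 a1 - A v2 x1 a1) + pW.ρ a1 a3 (A v1 x1 a2 + A v2 x2 a2)
      + pW.ρ a1 a2 (A v1 x2 a3 - A v2 x1 a3)
  iden17 : ∀ a2 a3 x1 x2 w1, pW.ρ a2 (M.ρ.ρ x1 x2 a3) w1 = rW.ρ (M.ψ.ρ a2 a3 x2) x1 w1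
  iden18 : ∀ a1 a3 x1 x2 w2, pW.ρ a1 (M.ρ.ρ x1 x2 a3) w2 = rW.ρ (M.ψ.ρ a1 a3 x2) x1 w2
  iden19 : ∀ a1 a2 x1 x2 w3, pW.ρ a1 a2 (rW.ρ x1 x2 w3) = rW.ρ (M.ψ.ρ a1 a2 x1) x2 w3
  iden20 : ∀ a1 a2 a3 x1 x2 v1 v2 w1 w2 w3,
    pW.ρ a1 a2 (A v1 x2 a3 - A v2 x1 a3) =
      A (pV.ρ a2 a3 v2 + B w2 a3 x2 - B w3 a1 x2) x1 a1 - A v1 (M.ψ.ρ a2 a3 x2) a1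
      - A (pV.ρ a1 a3 v2 + B w1 a3 x2 - B w3 a1 x2) x1 a2 + A v1 (M.ψ.ρ a1 a3 x2) a2
      + A (pV.ρ a1 a2 v1 + B w1 a2 x1 - B w2 a1 x1) x2 a3 - A v2 (M.ψ.ρ a1 a2 x1) a3
  iden21 : ∀ a2 a3 x1 x2 w1, pW.ρ a2 a3 (rW.ρ x1 x2 w1) =
    rW.ρ x1 x2 (pW.ρ a2 a3 w1) + rW.ρ (M.ψ.ρ a2 a3 x1) x2 w1 + rW.ρ x1 (M.ψ.ρ a2 a3 x2) w1
  iden22 : ∀ a1 a2 a3 x1 x2 v1 v2 w2 w3,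
    pW.ρ a2 a3 (A v1 x2 a1 - A v2 x1 a1) =
      (A v1 x2 (M.Lh.br a1 a2 a3) - A v2 x1 (M.Lh.br a1 a2 a3))
      - A v2 (M.ψ.ρ a2 a3 x1) a1 + A v1 (M.ψ.ρ a2 a3 x2) a1
      + A (pV.ρ a2 a3 v1 + B w2 a3 x1 - B w3 a2 x1) x2 a1
      - A (pV.ρ a2 a2 v2 + B w2 a3 x2 - B w3 a2 x2) x1 a1
  iden23 : ∀ x1 x2 a1 a3 w2, pW.ρ (M.ρ.ρ x1 x2 a1) a3 w2 = rW.ρ x1 x2 (pW.ρ a1 a3 w2)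
  iden24 : ∀ x1 x2 a1 a2 w3, pW.ρ (M.ρ.ρ x1 x2 a1) a2 w3 = rW.ρ x1 x2 (pW.ρ a1 a2 w3)

/-- Forget the axioms of a matched-pair representation. -/
def MPRep.toData {M : MatchedPair k g h} (R : MPRep (V := V) (W := W) M) :
    MPRepData k g h V W :=
  ⟨R.rV.ρ, R.pV.ρ, R.rW.ρ, R.pW.ρ, R.A, R.B⟩

end MPRepSec

/-- The adjoint representation data of a matched pair on itself. -/
def adjData {k g h : Type*} [CommRing k] [AddCommGroup g] [Module k g]
    [AddCommGroup h] [Module k h] (M : MatchedPair k g h) : MPRepData k g h g h :=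
  ⟨M.Lg.br, M.ψ.ρ, M.ρ.ρ, M.Lh.br, M.ρ.ρ, M.ψ.ρ⟩
section CochainSec

variable (k : Type*) (g h V W : Type*) [CommRing k]
  [AddCommGroup g] [Module k g] [AddCommGroup h] [Module k h]
  [AddCommGroup V] [Module k V] [AddCommGroup W] [Module k W]

/-- A 2-cochain `(ω, θ, ν, φ)` of a matched pair of 3-Lie algebras with
coefficients in a pair of modules `(V, W)`. -/
structure Cochain2 where
  ω : g →ₗ[k] g →ₗ[k] g →ₗ[k] V
  θ : h →ₗ[k] h →ₗ[k] h →ₗ[k] W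
  ν : g →ₗ[k] g →ₗ[k] h →ₗ[k] W
  φ : h →ₗ[k] h →ₗ[k] g →ₗ[k] V
  ω_alt₁ : ∀ x y, ω x x y = 0
  ω_alt₂ : ∀ x y, ω x y y = 0
  θ_alt₁ : ∀ a b, θ a a b = 0
  θ_alt₂ : ∀ a b, θ a b b = 0
  ν_skew : ∀ x, ν x x = 0
  φ_skew : ∀ a, φ a a = 0

variable {k g h V W}

instance : Sub (Cochain2 k g h V W) :=
  ⟨fun c d =>
    { ω := c.ω - d.ω
      θ := c.θ - d.θ
      ν := c.ν - d.ν
      φ := c.φ - d.φ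
      ω_alt₁ := by intro x y; simp [c.ω_alt₁, d.ω_alt₁]
      ω_alt₂ := by intro x y; simp [c.ω_alt₂, d.ω_alt₂]
      θ_alt₁ := by intro a b; simp [c.θ_alt₁, d.θ_alt₁]
      θ_alt₂ := by intro a b; simp [c.θ_alt₂, d.θ_alt₂]
      ν_skew := by intro x; simp [c.ν_skew, d.ν_skew]
      φ_skew := by intro a; simp [c.φ_skew, d.φ_skew] }⟩

/-- The eight 2-cocycle identities (2co-1)–(2co-8) of arXiv:2508.14044, with
coefficients in a representation (data) `R` of the matched pair `M`. -/
def IsCocycle2 (M : MatchedPair k g h) (R : MPRepData k g h V W)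
    (c : Cochain2 k g h V W) : Prop :=
  (∀ x1 x2 x3 x4 x5 : g,
    R.ρV x4 x5 (c.ω x1 x2 x3) + R.ρV x5 x3 (c.ω x1 x2 x4) + R.ρV x3 x4 (c.ω x1 x2 x5)
    + c.ω (M.Lg.br x1 x2 x3) x4 x5 + c.ω x3 (M.Lg.br x1 x2 x4) x5
    + c.ω x3 x4 (M.Lg.br x1 x2 x5)
    - R.ρV x1 x2 (c.ω x3 x4 x5) - c.ω x1 x2 (M.Lg.br x3 x4 x5) = 0) ∧
  (∀ (x1 x2 : g) (a1 a2 a3 : h),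
    R.ψW a2 a3 (c.ν x1 x2 a1) + R.ψW a3 a1 (c.ν x1 x2 a2) + R.ψW a1 a2 (c.ν x1 x2 a3)
    + c.θ (M.ρ.ρ x1 x2 a1) a2 a3 + c.θ a1 (M.ρ.ρ x1 x2 a2) a3 + c.θ a1 a2 (M.ρ.ρ x1 x2 a3)
    - R.ρW x1 x2 (c.θ a1 a2 a3) - c.ν x1 x2 (M.Lh.br a1 a2 a3) = 0) ∧
  (∀ (a1 a2 : h) (x1 x2 x3 : g),
    R.ρV x2 x3 (c.φ a1 a2 x1) + R.ρV x3 x1 (c.φ a1 a2 x2) + R.ρV x1 x2 (c.φ a1 a2 x3)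
    + c.ω (M.ψ.ρ a1 a2 x1) x2 x3 + c.ω x1 (M.ψ.ρ a1 a2 x2) x3 + c.ω x1 x2 (M.ψ.ρ a1 a2 x3)
    - R.ψV a1 a2 (c.ω x1 x2 x3) - c.φ a1 a2 (M.Lg.br x1 x2 x3) = 0) ∧
  (∀ (x1 x2 x3 : g) (a1 a2 : h),
    R.B (c.ν x1 x3 a2) a1 x2 + c.φ (M.ρ.ρ x1 x3 a2) a1 x2
    - R.B (c.ν x2 x3 a2) a1 x1 - c.φ (M.ρ.ρ x2 x3 a2) a1 x1
    + R.ρV x1 x2 (c.φ a1 a2 x3) + c.ω x1 x2 (M.ψ.ρ a1 a2 x3)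
    - R.B (c.ν x1 x2 a1) a2 x3 - c.φ (M.ρ.ρ x1 x2 a1) a2 x3 = 0) ∧
  (∀ (a1 a2 a3 : h) (x1 x2 : g),
    R.A (c.φ a1 a3 x2) x1 a2 + c.ν (M.ψ.ρ a1 a3 x2) x1 a2
    - R.A (c.φ a2 a3 x2) x1 a1 - c.ν (M.ψ.ρ a2 a3 x2) x1 a1
    + R.ψW a1 a2 (c.ν x1 x2 a3) + c.θ a1 a2 (M.ρ.ρ x1 x2 a3)
    - R.A (c.φ a1 a2 x1) x2 a3 - c.ν (M.ψ.ρ a1 a2 x1) x2 a3 = 0) ∧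
  (∀ (a1 a2 : h) (x1 x2 x3 : g),
    R.ψV a1 a2 (c.ω x1 x2 x3) + c.φ a1 a2 (M.Lg.br x1 x2 x3)
    + c.φ (M.ρ.ρ x2 x3 a1) a2 x1 + R.B (c.ν x2 x3 a1) a2 x1
    + c.φ a1 (M.ρ.ρ x2 x3 a2) x1 - R.B (c.ν x2 x3 a2) a1 x1
    - c.ω (M.ψ.ρ a1 a2 x1) x2 x3 - R.ρV x2 x3 (c.φ a1 a2 x1) = 0) ∧
  (∀ (x1 x2 : g) (a1 a2 a3 : h),
    R.ρW x1 x2 (c.θ a1 a2 a3) + c.ν x1 x2 (M.Lh.br a1 a2 a3)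
    + c.ν (M.ψ.ρ a2 a3 x1) x2 a1 + R.A (c.φ a2 a3 x1) x2 a1
    + c.ν x1 (M.ψ.ρ a2 a3 x2) a1 - R.A (c.φ a2 a3 x2) x1 a1
    - c.θ (M.ρ.ρ x1 x2 a1) a2 a3 - R.ψW a2 a3 (c.ν x1 x2 a1) = 0) ∧
  (∀ a1 a2 a3 a4 a5 : h,
    R.ψW a4 a5 (c.θ a1 a2 a3) + R.ψW a5 a3 (c.θ a1 a2 a4) + R.ψW a3 a4 (c.θ a1 a2 a5)
    + c.θ (M.Lh.br a1 a2 a3) a4 a5 + c.θ a3 (M.Lh.br a1 a2 a4) a5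
    + c.θ a3 a4 (M.Lh.br a1 a2 a5)
    - R.ψW a1 a2 (c.θ a3 a4 a5) - c.θ a1 a2 (M.Lh.br a3 a4 a5) = 0)

/-- `c` is the image under the differential `D₁` of the 1-cochain `(N1, N2)`. -/
def IsD1 (M : MatchedPair k g h) (R : MPRepData k g h V W)
    (N1 : g →ₗ[k] V) (N2 : h →ₗ[k] W) (c : Cochain2 k g h V W) : Prop :=
  (∀ x1 x2 x3, c.ω x1 x2 x3 =
    R.ρV x2 x3 (N1 x1) + R.ρV x3 x1 (N1 x2) + R.ρV x1 x2 (N1 x3) - N1 (M.Lg.br x1 x2 x3)) ∧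
  (∀ x1 x2 a, c.ν x1 x2 a =
    R.ρW x1 x2 (N2 a) - N2 (M.ρ.ρ x1 x2 a) + R.A (N1 x1) x2 a - R.A (N1 x2) x1 a) ∧
  (∀ a1 a2 x, c.φ a1 a2 x =
    R.ψV a1 a2 (N1 x) - N1 (M.ψ.ρ a1 a2 x) + R.B (N2 a1) a2 x - R.B (N2 a2) a1 x) ∧
  (∀ a1 a2 a3, c.θ a1 a2 a3 =
    R.ψW a2 a3 (N2 a1) + R.ψW a3 a1 (N2 a2) + R.ψW a1 a2 (N2 a3) - N2 (M.Lh.br a1 a2 a3))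

/-- `c` is a 2-coboundary. -/
def IsCoboundary (M : MatchedPair k g h) (R : MPRepData k g h V W)
    (c : Cochain2 k g h V W) : Prop :=
  ∃ (N1 : g →ₗ[k] V) (N2 : h →ₗ[k] W), IsD1 M R N1 N2 c

/-- Two 2-cochains are cohomologous if their difference is a 2-coboundary. -/
def Cohomologous (M : MatchedPair k g h) (R : MPRepData k g h V W)
    (c c' : Cochain2 k g h V W) : Prop :=
  IsCoboundary M R (c - c')

/-- The 1-cocycle conditions `D₁(ζ, η) = 0`. -/
def IsCocycle1 (M : MatchedPair k g h) (R : MPRepData k g h V W)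
    (ζ : g →ₗ[k] V) (η : h →ₗ[k] W) : Prop :=
  (∀ x1 x2 x3,
    R.ρV x2 x3 (ζ x1) + R.ρV x3 x1 (ζ x2) + R.ρV x1 x2 (ζ x3) = ζ (M.Lg.br x1 x2 x3)) ∧
  (∀ x1 x2 a,
    R.ρW x1 x2 (η a) - η (M.ρ.ρ x1 x2 a) + R.A (ζ x1) x2 a - R.A (ζ x2) x1 a = 0) ∧
  (∀ a1 a2 x,
    R.ψV a1 a2 (ζ x) - ζ (M.ψ.ρ a1 a2 x) + R.B (η a1) a2 x - R.B (η a2) a1 x = 0) ∧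
  (∀ a1 a2 a3,
    R.ψW a2 a3 (η a1) + R.ψW a3 a1 (η a2) + R.ψW a1 a2 (η a3) = η (M.Lh.br a1 a2 a3))

/-- The second cohomology group of a matched pair of 3-Lie algebras (as a quotient
of 2-cocycles by the relation of being cohomologous). -/
def H2MPL (M : MatchedPair k g h) (R : MPRepData k g h V W) :=
  Quot (fun c c' : {c : Cochain2 k g h V W // IsCocycle2 M R c} =>
    Cohomologous M R c.1 c'.1)

end CochainSec

section DualSec

variable {k : Type*} [CommRing k] {g : Type*} [AddCommGroup g] [Module k g]

/-- The `k[t]/(t²)`-module structure on `g[t]/(t²) = g × g`, where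
`(a + b t) • (x₀ + x₁ t) = a • x₀ + (a • x₁ + b • x₀) t`. -/
instance dualNumberModule : Module (DualNumber k) (g × g) where
  smul r x := (r.fst • x.1, r.fst • x.2 + r.snd • x.1)
  one_smul x := by
    show ((1 : DualNumber k).fst • x.1, (1 : DualNumber k).fst • x.2
      + (1 : DualNumber k).snd • x.1) = x
    simp
  mul_smul r s x := by
    show ((r * s).fst • x.1, (r * s).fst • x.2 + (r * s).snd • x.1)
      = (r.fst • (s.fst • x.1),
         r.fst • (s.fst • x.2 + s.snd • x.1) + r.snd • (s.fst • x.1))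
    ext
    · simp [TrivSqZeroExt.fst_mul, mul_smul]
    · simp only [TrivSqZeroExt.snd_mul, smul_eq_mul, MulOpposite.smul_eq_mul_unop,
        MulOpposite.unop_op, add_smul, mul_smul, TrivSqZeroExt.fst_mul, smul_add]
      abel
  smul_zero r := by
    show ((r : DualNumber k).fst • (0 : g), r.fst • (0 : g) + r.snd • (0 : g)) = 0
    simp
  smul_add r x y := by
    show (r.fst • (x.1 + y.1), r.fst • (x.2 + y.2) + r.snd • (x.1 + y.1))
      = ((r.fst • x.1, r.fst • x.2 + r.snd • x.1)
        + (r.fst • y.1, r.fst • y.2 + r.snd • y.1))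
    ext <;> (simp [smul_add]; try abel)
  add_smul r s x := by
    show ((r + s).fst • x.1, (r + s).fst • x.2 + (r + s).snd • x.1)
      = ((r.fst • x.1, r.fst • x.2 + r.snd • x.1)
        + (s.fst • x.1, s.fst • x.2 + s.snd • x.1))
    ext <;> (simp [add_smul]; try abel)
  zero_smul x := by
    show ((0 : DualNumber k).fst • x.1, (0 : DualNumber k).fst • x.2
      + (0 : DualNumber k).snd • x.1) = 0
    simp

end DualSec

section DeformSec

variable {k g h : Type*} [CommRing k] [AddCommGroup g] [Module k g]
  [AddCommGroup h] [Module k h]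

/-- The `t`-linear extension of the deformed bracket `[·,·,·] + t ω` on `g[t]/(t²)`. -/
def defBrG (M : MatchedPair k g h) (c : Cochain2 k g h g h) :
    g × g → g × g → g × g → g × g := fun X Y Z =>
  (M.Lg.br X.1 Y.1 Z.1,
   c.ω X.1 Y.1 Z.1 + M.Lg.br X.2 Y.1 Z.1 + M.Lg.br X.1 Y.2 Z.1 + M.Lg.br X.1 Y.1 Z.2)

/-- The `t`-linear extension of the deformed bracket `[·,·,·] + t θ` on `h[t]/(t²)`. -/
def defBrH (M : MatchedPair k g h) (c : Cochain2 k g h g h) :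
    h × h → h × h → h × h → h × h := fun A B C =>
  (M.Lh.br A.1 B.1 C.1,
   c.θ A.1 B.1 C.1 + M.Lh.br A.2 B.1 C.1 + M.Lh.br A.1 B.2 C.1 + M.Lh.br A.1 B.1 C.2)

/-- The `t`-linear extension of the deformed action `ρ + t ν`. -/
def defRho (M : MatchedPair k g h) (c : Cochain2 k g h g h) :
    g × g → g × g → h × h → h × h := fun X Y A =>
  (M.ρ.ρ X.1 Y.1 A.1,
   c.ν X.1 Y.1 A.1 + M.ρ.ρ X.2 Y.1 A.1 + M.ρ.ρ X.1 Y.2 A.1 + M.ρ.ρ X.1 Y.1 A.2)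

/-- The `t`-linear extension of the deformed action `ψ + t φ`. -/
def defPsi (M : MatchedPair k g h) (c : Cochain2 k g h g h) :
    h × h → h × h → g × g → g × g := fun A B X =>
  (M.ψ.ρ A.1 B.1 X.1,
   c.φ A.1 B.1 X.1 + M.ψ.ρ A.2 B.1 X.1 + M.ψ.ρ A.1 B.2 X.1 + M.ψ.ρ A.1 B.1 X.2)

/-- `(ω, θ, ν, φ)` is an infinitesimal deformation of the matched pair `M`: the
`t`-linear extensions of the deformed structure maps make
`(g[t]/(t²), h[t]/(t²))` into a matched pair of 3-Lie algebras over `k[t]/(t²)`. -/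
def IsInfDeformation (M : MatchedPair k g h) (c : Cochain2 k g h g h) : Prop :=
  ∃ Mt : MatchedPair (DualNumber k) (g × g) (h × h),
    (∀ X Y Z, Mt.Lg.br X Y Z = defBrG M c X Y Z) ∧
    (∀ A B C, Mt.Lh.br A B C = defBrH M c A B C) ∧
    (∀ X Y A, Mt.ρ.ρ X Y A = defRho M c X Y A) ∧
    (∀ A B X, Mt.ψ.ρ A B X = defPsi M c A B X)

/-- The map `id + t f` on `g[t]/(t²)`. -/
def tMap (f : g →ₗ[k] g) : g × g → g × g := fun p => (p.1, p.2 + f p.1)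

/-- The pair `(id_g + t f, id_h + t g')` is a morphism of matched pairs over
`k[t]/(t²)` from the deformation `c` to the deformation `c'`. -/
def IsDeformMorphism (M : MatchedPair k g h) (c c' : Cochain2 k g h g h)
    (f : g →ₗ[k] g) (g' : h →ₗ[k] h) : Prop :=
  (∀ X Y Z, tMap f (defBrG M c X Y Z) = defBrG M c' (tMap f X) (tMap f Y) (tMap f Z)) ∧
  (∀ A B C, tMap g' (defBrH M c A B C) = defBrH M c' (tMap g' A) (tMap g' B) (tMap g' C)) ∧
  (∀ X Y A, tMap g' (defRho M c X Y A) = defRho M c' (tMap f X) (tMap f Y) (tMap g' A)) ∧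
  (∀ A B X, tMap f (defPsi M c A B X) = defPsi M c' (tMap g' A) (tMap g' B) (tMap f X))

/-- Equivalence of infinitesimal deformations. -/
def DeformEquiv (M : MatchedPair k g h) (c c' : Cochain2 k g h g h) : Prop :=
  ∃ (f : g →ₗ[k] g) (g' : h →ₗ[k] h), IsDeformMorphism M c c' f g'

end DeformSec

section ExtSec

variable (k : Type*) (g h V W ghat hhat : Type*) [CommRing k]
  [AddCommGroup g] [Module k g] [AddCommGroup h] [Module k h]
  [AddCommGroup V] [Module k V] [AddCommGroup W] [Module k W]
  [AddCommGroup ghat] [Module k ghat] [AddCommGroup hhat] [Module k hhat]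

/-- An abelian extension `0 → V ⋈ W → ĝ ⋈ ĥ → g ⋈ h → 0` of a matched pair of
3-Lie algebras `M` by the pair of modules `(V, W)` (with trivial structure). -/
structure AbelianExt (M : MatchedPair k g h) where
  Mhat : MatchedPair k ghat hhat
  i1 : V →ₗ[k] ghat
  i2 : W →ₗ[k] hhat
  j1 : ghat →ₗ[k] g
  j2 : hhat →ₗ[k] h
  i1_br : ∀ v1 v2 v3, Mhat.Lg.br (i1 v1) (i1 v2) (i1 v3) = 0
  i2_br : ∀ w1 w2 w3, Mhat.Lh.br (i2 w1) (i2 w2) (i2 w3) = 0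
  i_rho : ∀ v1 v2 w, Mhat.ρ.ρ (i1 v1) (i1 v2) (i2 w) = 0
  i_psi : ∀ w1 w2 v, Mhat.ψ.ρ (i2 w1) (i2 w2) (i1 v) = 0
  j1_br : ∀ X Y Z, j1 (Mhat.Lg.br X Y Z) = M.Lg.br (j1 X) (j1 Y) (j1 Z)
  j2_br : ∀ A B C, j2 (Mhat.Lh.br A B C) = M.Lh.br (j2 A) (j2 B) (j2 C)
  j_rho : ∀ X Y A, j2 (Mhat.ρ.ρ X Y A) = M.ρ.ρ (j1 X) (j1 Y) (j2 A)
  j_psi : ∀ A B X, j1 (Mhat.ψ.ρ A B X) = M.ψ.ρ (j2 A) (j2 B) (j1 X)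
  i1_inj : Function.Injective i1
  i2_inj : Function.Injective i2
  j1_surj : Function.Surjective j1
  j2_surj : Function.Surjective j2
  exact1 : ∀ X, j1 X = 0 ↔ ∃ v, i1 v = X
  exact2 : ∀ A, j2 A = 0 ↔ ∃ w, i2 w = A

variable {k g h V W ghat hhat}
variable {M : MatchedPair k g h}

/-- `(s1, s2)` is a section of `(j1, j2)`. -/
def IsSection (E : AbelianExt k g h V W ghat hhat M)
    (s1 : g →ₗ[k] ghat) (s2 : h →ₗ[k] hhat) : Prop :=
  (∀ x, E.j1 (s1 x) = x) ∧ (∀ a, E.j2 (s2 a) = a)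

/-- The representation data `R` on `(V, W)` is the one induced on the abelian
extension `E` (via any section, transported along the injections `i1, i2`). -/
def IsInducedRep (E : AbelianExt k g h V W ghat hhat M)
    (R : MPRepData k g h V W) : Prop :=
  ∀ s1 s2, IsSection E s1 s2 →
    (∀ x1 x2 v, E.i1 (R.ρV x1 x2 v) = E.Mhat.Lg.br (s1 x1) (s1 x2) (E.i1 v)) ∧
    (∀ x1 x2 w, E.i2 (R.ρW x1 x2 w) = E.Mhat.ρ.ρ (s1 x1) (s1 x2) (E.i2 w)) ∧
    (∀ a1 a2 v, E.i1 (R.ψV a1 a2 v) = E.Mhat.ψ.ρ (s2 a1) (s2 a2) (E.i1 v)) ∧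
    (∀ a1 a2 w, E.i2 (R.ψW a1 a2 w) = E.Mhat.Lh.br (s2 a1) (s2 a2) (E.i2 w)) ∧
    (∀ v x a, E.i2 (R.A v x a) = E.Mhat.ρ.ρ (E.i1 v) (s1 x) (s2 a)) ∧
    (∀ w a x, E.i1 (R.B w a x) = E.Mhat.ψ.ρ (E.i2 w) (s2 a) (s1 x))

/-- `c` is the 2-cocycle associated to the abelian extension `E` and the
section `(s1, s2)`. -/
def IsExtCocycle (E : AbelianExt k g h V W ghat hhat M)
    (s1 : g →ₗ[k] ghat) (s2 : h →ₗ[k] hhat) (c : Cochain2 k g h V W) : Prop :=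
  (∀ x1 x2 x3, E.i1 (c.ω x1 x2 x3) =
    E.Mhat.Lg.br (s1 x1) (s1 x2) (s1 x3) - s1 (M.Lg.br x1 x2 x3)) ∧
  (∀ a1 a2 a3, E.i2 (c.θ a1 a2 a3) =
    E.Mhat.Lh.br (s2 a1) (s2 a2) (s2 a3) - s2 (M.Lh.br a1 a2 a3)) ∧
  (∀ x1 x2 a, E.i2 (c.ν x1 x2 a) =
    E.Mhat.ρ.ρ (s1 x1) (s1 x2) (s2 a) - s2 (M.ρ.ρ x1 x2 a)) ∧
  (∀ a1 a2 x, E.i1 (c.φ a1 a2 x) =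
    E.Mhat.ψ.ρ (s2 a1) (s2 a2) (s1 x) - s1 (M.ψ.ρ a1 a2 x))

end ExtSec

section ExtIsoSec

variable {k g h V W ghat hhat ghat' hhat' : Type*} [CommRing k]
  [AddCommGroup g] [Module k g] [AddCommGroup h] [Module k h]
  [AddCommGroup V] [Module k V] [AddCommGroup W] [Module k W]
  [AddCommGroup ghat] [Module k ghat] [AddCommGroup hhat] [Module k hhat]
  [AddCommGroup ghat'] [Module k ghat'] [AddCommGroup hhat'] [Module k hhat']
  {M : MatchedPair k g h}

/-- `(f, gm)` is an isomorphism of abelian extensions from `E` to `E'`. -/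
def IsExtIso (E : AbelianExt k g h V W ghat hhat M)
    (E' : AbelianExt k g h V W ghat' hhat' M)
    (f : ghat →ₗ[k] ghat') (gm : hhat →ₗ[k] hhat') : Prop :=
  Function.Bijective f ∧ Function.Bijective gm ∧
  (∀ X Y Z, f (E.Mhat.Lg.br X Y Z) = E'.Mhat.Lg.br (f X) (f Y) (f Z)) ∧
  (∀ A B C, gm (E.Mhat.Lh.br A B C) = E'.Mhat.Lh.br (gm A) (gm B) (gm C)) ∧
  (∀ X Y A, gm (E.Mhat.ρ.ρ X Y A) = E'.Mhat.ρ.ρ (f X) (f Y) (gm A)) ∧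
  (∀ A B X, f (E.Mhat.ψ.ρ A B X) = E'.Mhat.ψ.ρ (gm A) (gm B) (f X)) ∧
  (∀ v, f (E.i1 v) = E'.i1 v) ∧ (∀ w, gm (E.i2 w) = E'.i2 w) ∧
  (∀ X, E'.j1 (f X) = E.j1 X) ∧ (∀ A, E'.j2 (gm A) = E.j2 A)

end ExtIsoSec

section AutSec

variable {k g h V W ghat hhat : Type*} [CommRing k]
  [AddCommGroup g] [Module k g] [AddCommGroup h] [Module k h]
  [AddCommGroup V] [Module k V] [AddCommGroup W] [Module k W]
  [AddCommGroup ghat] [Module k ghat] [AddCommGroup hhat] [Module k hhat]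

/-- `(f, gm)` is an automorphism of the matched pair `M` (as a pair of linear
equivalences preserving the brackets and actions). -/
def IsMPAut (M : MatchedPair k g h) (f : g ≃ₗ[k] g) (gm : h ≃ₗ[k] h) : Prop :=
  (∀ x y z, f (M.Lg.br x y z) = M.Lg.br (f x) (f y) (f z)) ∧
  (∀ a b c, gm (M.Lh.br a b c) = M.Lh.br (gm a) (gm b) (gm c)) ∧
  (∀ x y a, gm (M.ρ.ρ x y a) = M.ρ.ρ (f x) (f y) (gm a)) ∧
  (∀ a b x, f (M.ψ.ρ a b x) = M.ψ.ρ (gm a) (gm b) (f x))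

/-- A pair of (not necessarily invertible a priori) linear maps is an
automorphism of the matched pair `M`. -/
def IsMPAutMap (M : MatchedPair k g h) (f : g →ₗ[k] g) (gm : h →ₗ[k] h) : Prop :=
  Function.Bijective f ∧ Function.Bijective gm ∧
  (∀ x y z, f (M.Lg.br x y z) = M.Lg.br (f x) (f y) (f z)) ∧
  (∀ a b c, gm (M.Lh.br a b c) = M.Lh.br (gm a) (gm b) (gm c)) ∧
  (∀ x y a, gm (M.ρ.ρ x y a) = M.ρ.ρ (f x) (f y) (gm a)) ∧
  (∀ a b x, f (M.ψ.ρ a b x) = M.ψ.ρ (gm a) (gm b) (f x))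

variable {M : MatchedPair k g h}

/-- The pair `(α, β) = ((α1, α2), (β1, β2))` is inducible: it is the image under
`Φ` of an automorphism `(γ1, γ2)` of the extension preserving `(V, W)`. -/
def Inducible (E : AbelianExt k g h V W ghat hhat M)
    (s1 : g →ₗ[k] ghat) (s2 : h →ₗ[k] hhat)
    (α1 : g ≃ₗ[k] g) (α2 : h ≃ₗ[k] h) (β1 : V ≃ₗ[k] V) (β2 : W ≃ₗ[k] W) : Prop :=
  ∃ (γ1 : ghat ≃ₗ[k] ghat) (γ2 : hhat ≃ₗ[k] hhat),
    IsMPAut E.Mhat γ1 γ2 ∧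
    (∀ v, γ1 (E.i1 v) = E.i1 (β1 v)) ∧ (∀ w, γ2 (E.i2 w) = E.i2 (β2 w)) ∧
    (∀ x, E.j1 (γ1 (s1 x)) = α1 x) ∧ (∀ a, E.j2 (γ2 (s2 a)) = α2 a)

/-- The conditions (Iam1)–(Iam4) of Theorem 5.2 of arXiv:2508.14044 on the pair
of linear maps `(ζ, η)`. -/
def IamCond (M : MatchedPair k g h) (R : MPRepData k g h V W)
    (c : Cochain2 k g h V W)
    (α1 : g ≃ₗ[k] g) (α2 : h ≃ₗ[k] h) (β1 : V ≃ₗ[k] V) (β2 : W ≃ₗ[k] W)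
    (ζ : g →ₗ[k] V) (η : h →ₗ[k] W) : Prop :=
  (∀ x1 x2 x3, β1 (c.ω x1 x2 x3) - c.ω (α1 x1) (α1 x2) (α1 x3) =
      R.ρV (α1 x2) (α1 x3) (ζ x1) + R.ρV (α1 x3) (α1 x1) (ζ x2)
      + R.ρV (α1 x1) (α1 x2) (ζ x3) - ζ (M.Lg.br x1 x2 x3)) ∧
  (∀ a1 a2 a3, β2 (c.θ a1 a2 a3) - c.θ (α2 a1) (α2 a2) (α2 a3) =
      R.ψW (α2 a2) (α2 a3) (η a1) + R.ψW (α2 a3) (α2 a1) (η a2)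
      + R.ψW (α2 a1) (α2 a2) (η a3) - η (M.Lh.br a1 a2 a3)) ∧
  (∀ x1 x2 a, β2 (c.ν x1 x2 a) - c.ν (α1 x1) (α1 x2) (α2 a) =
      R.ρW (α1 x1) (α1 x2) (η a) - η (M.ρ.ρ x1 x2 a)
      + R.A (ζ x1) (α1 x2) (α2 a) - R.A (ζ x2) (α1 x1) (α2 a)) ∧
  (∀ a1 a2 x, β1 (c.φ a1 a2 x) - c.φ (α2 a1) (α2 a2) (α1 x) =
      R.ψV (α2 a1) (α2 a2) (ζ x) - ζ (M.ψ.ρ a1 a2 x)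
      + R.B (η a1) (α2 a2) (α1 x) - R.B (η a2) (α2 a1) (α1 x))

/-- The subgroup `C` of compatible pairs of automorphisms. -/
def InC (M : MatchedPair k g h) (R : MPRepData k g h V W) (c : Cochain2 k g h V W)
    (α1 : g ≃ₗ[k] g) (α2 : h ≃ₗ[k] h) (β1 : V ≃ₗ[k] V) (β2 : W ≃ₗ[k] W) : Prop :=
  ∃ (ζ : g →ₗ[k] V) (η : h →ₗ[k] W), IamCond M R c α1 α2 β1 β2 ζ η

/-- `c'` is the transform `(ω, θ, ν, φ)_{(α,β)}` of the 2-cochain `c` under the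
pair of automorphisms `(α, β)`. -/
def IsTransformed (c : Cochain2 k g h V W)
    (α1 : g ≃ₗ[k] g) (α2 : h ≃ₗ[k] h) (β1 : V ≃ₗ[k] V) (β2 : W ≃ₗ[k] W)
    (c' : Cochain2 k g h V W) : Prop :=
  (∀ x1 x2 x3, c'.ω x1 x2 x3 = β1 (c.ω (α1.symm x1) (α1.symm x2) (α1.symm x3))) ∧
  (∀ a1 a2 a3, c'.θ a1 a2 a3 = β2 (c.θ (α2.symm a1) (α2.symm a2) (α2.symm a3))) ∧
  (∀ x1 x2 a, c'.ν x1 x2 a = β2 (c.ν (α1.symm x1) (α1.symm x2) (α2.symm a))) ∧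
  (∀ a1 a2 x, c'.φ a1 a2 x = β1 (c.φ (α2.symm a1) (α2.symm a2) (α1.symm x)))

end AutSec

/-- The class of a 2-cocycle in the second cohomology group. -/
def H2MPL.mk {k g h V W : Type*} [CommRing k]
    [AddCommGroup g] [Module k g] [AddCommGroup h] [Module k h]
    [AddCommGroup V] [Module k V] [AddCommGroup W] [Module k W]
    (M : MatchedPair k g h) (R : MPRepData k g h V W)
    (c : {c : Cochain2 k g h V W // IsCocycle2 M R c}) : H2MPL M R :=
  Quot.mk _ c

section AuxLemmas

variable {k : Type*} [CommRing k] {g V : Type*} [AddCommGroup g] [Module k g]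
  [AddCommGroup V] [Module k V]

lemma ThreeLie.swap12 (L : ThreeLie k g) (x y z : g) : L.br x y z = - L.br y x z := by
  have h := L.alt₁ (x + y) z
  simp only [map_add, LinearMap.add_apply, L.alt₁, zero_add, add_zero] at h
  exact eq_neg_of_add_eq_zero_right h

lemma ThreeLie.swap23 (L : ThreeLie k g) (x y z : g) : L.br x y z = - L.br x z y := by
  have h := L.alt₂ x (y + z)
  simp only [map_add, LinearMap.add_apply, L.alt₂, zero_add, add_zero] at h
  exact eq_neg_of_add_eq_zero_right h

lemma ThreeLie.cyclic (L : ThreeLie k g) (x y z : g) : L.br x y z = L.br y z x := by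
  rw [L.swap12, L.swap23 y x z, neg_neg]

lemma Rep3.swap {L : ThreeLie k g} (R : Rep3 k g V L) (x y : g) (v : V) :
    R.ρ x y v = - R.ρ y x v := by
  have h := R.skew (x + y)
  simp only [map_add, LinearMap.add_apply, R.skew, zero_add, add_zero] at h
  have h2 : R.ρ y x v + R.ρ x y v = 0 := by
    have := congrArg (fun e : Module.End k V => e v) h
    simpa using this
  exact eq_neg_of_add_eq_zero_right h2

end AuxLemmas

/-- If two infinitesimal deformations of a matched pair of 3-Lie
algebras are equivalent via `(id + t f, id + t g')`, then their difference is the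
coboundary `D₁(f, g')` with coefficients in the adjoint representation; in
particular, the two 2-cocycles are cohomologous. -/
theorem equivalent_deformations_cohomologous
    {k : Type*} [Field k] {g h : Type*}
    [AddCommGroup g] [Module k g] [AddCommGroup h] [Module k h]
    (M : MatchedPair k g h) (c c' : Cochain2 k g h g h)
    (hc : IsInfDeformation M c) (hc' : IsInfDeformation M c')
    (f : g →ₗ[k] g) (g' : h →ₗ[k] h)
    (hmor : IsDeformMorphism M c c' f g') :
    IsD1 M (adjData M) f g' (c - c') ∧ Cohomologous M (adjData M) c c' := by
  obtain ⟨h1, h2, h3, h4⟩ := hmor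
  have hω : ∀ x1 x2 x3 : g, (c - c').ω x1 x2 x3 =
      M.Lg.br x2 x3 (f x1) + M.Lg.br x3 x1 (f x2) + M.Lg.br x1 x2 (f x3)
        - f (M.Lg.br x1 x2 x3) := by
    intro x1 x2 x3
    have h := congrArg Prod.snd (h1 (x1, 0) (x2, 0) (x3, 0))
    simp only [tMap, defBrG, map_zero, LinearMap.zero_apply, add_zero, zero_add] at h
    show c.ω x1 x2 x3 - c'.ω x1 x2 x3 = _
    have cyc1 := M.Lg.cyclic (f x1) x2 x3
    have cyc2 := (M.Lg.cyclic x1 (f x2) x3).trans (M.Lg.cyclic (f x2) x3 x1)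
    linear_combination (norm := abel1) h + cyc1 + cyc2
  have hν : ∀ (x1 x2 : g) (a : h), (c - c').ν x1 x2 a =
      M.ρ.ρ x1 x2 (g' a) - g' (M.ρ.ρ x1 x2 a)
        + M.ρ.ρ (f x1) x2 a - M.ρ.ρ (f x2) x1 a := by
    intro x1 x2 a
    have h := congrArg Prod.snd (h3 (x1, 0) (x2, 0) (a, 0))
    simp only [tMap, defRho, map_zero, LinearMap.zero_apply, add_zero, zero_add] at h
    show c.ν x1 x2 a - c'.ν x1 x2 a = _
    have sw := M.ρ.swap x1 (f x2) a
    linear_combination (norm := abel1) h + sw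
  have hφ : ∀ (a1 a2 : h) (x : g), (c - c').φ a1 a2 x =
      M.ψ.ρ a1 a2 (f x) - f (M.ψ.ρ a1 a2 x)
        + M.ψ.ρ (g' a1) a2 x - M.ψ.ρ (g' a2) a1 x := by
    intro a1 a2 x
    have h := congrArg Prod.snd (h4 (a1, 0) (a2, 0) (x, 0))
    simp only [tMap, defPsi, map_zero, LinearMap.zero_apply, add_zero, zero_add] at h
    show c.φ a1 a2 x - c'.φ a1 a2 x = _
    have sw := M.ψ.swap a1 (g' a2) x
    linear_combination (norm := abel1) h + sw
  have hθ : ∀ a1 a2 a3 : h, (c - c').θ a1 a2 a3 =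
      M.Lh.br a2 a3 (g' a1) + M.Lh.br a3 a1 (g' a2) + M.Lh.br a1 a2 (g' a3)
        - g' (M.Lh.br a1 a2 a3) := by
    intro a1 a2 a3
    have h := congrArg Prod.snd (h2 (a1, 0) (a2, 0) (a3, 0))
    simp only [tMap, defBrH, map_zero, LinearMap.zero_apply, add_zero, zero_add] at h
    show c.θ a1 a2 a3 - c'.θ a1 a2 a3 = _
    have cyc1 := M.Lh.cyclic (g' a1) a2 a3
    have cyc2 := (M.Lh.cyclic a1 (g' a2) a3).trans (M.Lh.cyclic (g' a2) a3 a1)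
    linear_combination (norm := abel1) h + cyc1 + cyc2
  have hD1 : IsD1 M (adjData M) f g' (c - c') := ⟨hω, hν, hφ, hθ⟩
  exact ⟨hD1, f, g', hD1⟩
end

section
/- Let 0 -> V >< W -> ghat >< hhat -> g >< h -> 0 be an abelian extension of a matched pair of 3-Lie algebras (g,h,rho,psi) by (V,W), let (s1,s2) be a section, and let (V,W,alpha,beta) be the induced representation. Define omega(x1,x2,x3) = [s1(x1),s1(x2),s1(x3)] - s1([x1,x2,x3]), theta(a1,a2,a3) = [s2(a1),s2(a2),s2(a3)] - s2([a1,a2,a3]), nu(x1,x2)a = rhohat(s1(x1),s1(x2))s2(a) - s2(rho(x1,x2)a), and phi(a1,a2)x = psihat(s2(a1),s2(a2))s1(x) - s1(psi(a1,a2)x). Then (omega,theta,nu,phi) is a 2-cocycle of (g,h,rho,psi) with coefficients in the induced representation, its cohomology class in H2_MPL(g,h;V,W) does not depend on the choice of the section, and isomorphic abelian extensions determine the same cohomology class. -/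
universe u₁ u₂

/-!
Everything is computed inside the extension. After applying the injections `i₁`, `i₂`, each
cocycle identity becomes the fundamental identity or one of the axioms (mp1)–(mp6) of the
matched pair `(ĝ, ĥ)` evaluated on values of the section, and the corresponding identity of
`(g, h)` pushed through the section.

Two sections differ by `i ∘ N` for a pair of linear maps `N = (N₁, N₂)`, and expanding the
structure maps multilinearly gives `c - c' = D₁ N`, provided the terms quadratic in `N` vanish.
They do because the induced representation is the same for every section: comparing a section
with its perturbations by `i ∘ K` shows that `T(u, y, v) = [i₁ u, s₁ y, i₁ v]` satisfies
`T (K x) y = T (K y) x` for every linear `K`, and over a field this (unlike mere alternation,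
which is too weak in characteristic `2`) forces `T (N x) y (N z) = 0`.

An isomorphism of extensions carries sections and their cocycles to sections and cocycles of
the other extension, so the last claim reduces to independence of the section.
-/

section ThreeLieBasics

variable {k G M : Type*} [CommRing k] [AddCommGroup G] [Module k G]
  [AddCommGroup M] [Module k M]

namespace ThreeLie

variable (L : ThreeLie k G)

lemma br_swap_left (x y z : G) : L.br x y z = -L.br y x z := by
  have h := L.alt₁ (x + y) z
  simp only [map_add, LinearMap.add_apply, L.alt₁] at h
  linear_combination (norm := module) h

lemma br_swap_right (x y z : G) : L.br x y z = -L.br x z y := by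
  have h := L.alt₂ x (y + z)
  simp only [map_add, LinearMap.add_apply, L.alt₂] at h
  linear_combination (norm := module) h

lemma br_rotate (x y z : G) : L.br x y z = L.br y z x := by
  rw [L.br_swap_left x y z, L.br_swap_right y x z, neg_neg]

end ThreeLie

lemma Rep3.ρ_swap {L : ThreeLie k G} (ρ : Rep3 k G M L) (x y : G) (m : M) :
    ρ.ρ x y m = -ρ.ρ y x m := by
  have h := LinearMap.congr_fun (ρ.skew (x + y)) m
  simp only [map_add, LinearMap.add_apply, ρ.skew, LinearMap.zero_apply, zero_add,
    add_zero] at h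
  linear_combination (norm := module) h

end ThreeLieBasics

section ShiftedSection

variable {k G M g h V W : Type*} [CommRing k] [AddCommGroup G] [Module k G]
  [AddCommGroup M] [Module k M] [AddCommGroup g] [Module k g] [AddCommGroup h] [Module k h]
  [AddCommGroup V] [Module k V] [AddCommGroup W] [Module k W]

lemma ThreeLie.br_shifted_section (L : ThreeLie k G) (i : V →ₗ[k] G) (s : g →ₗ[k] G)
    (N : g →ₗ[k] V) (hi : ∀ u v w, L.br (i u) (i v) (i w) = 0)
    (hN : ∀ x y z, L.br (i (N x)) (s y) (i (N z)) = 0) (x1 x2 x3 : g) :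
    L.br (s x1 - i (N x1)) (s x2 - i (N x2)) (s x3 - i (N x3)) =
      L.br (s x1) (s x2) (s x3) - L.br (s x2) (s x3) (i (N x1))
        - L.br (s x3) (s x1) (i (N x2)) - L.br (s x1) (s x2) (i (N x3)) := by
  simp only [map_sub, LinearMap.sub_apply, hi]
  linear_combination (norm := module) L.br_rotate (s x3) (s x1) (i (N x2))
    - L.br_rotate (i (N x1)) (s x2) (s x3) + L.br_swap_left (s x1) (i (N x2)) (i (N x3))
    + L.br_swap_right (i (N x1)) (i (N x2)) (s x3) - hN x2 x1 x3 + hN x1 x2 x3 - hN x1 x3 x2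

lemma Rep3.ρ_shifted_section {L : ThreeLie k G} (ρ : Rep3 k G M L) (i : V →ₗ[k] G)
    (j : W →ₗ[k] M) (s : g →ₗ[k] G) (t : h →ₗ[k] M) (N1 : g →ₗ[k] V) (N2 : h →ₗ[k] W)
    (hij : ∀ u v w, ρ.ρ (i u) (i v) (j w) = 0)
    (hN2 : ∀ v x a, ρ.ρ (i v) (s x) (j (N2 a)) = 0)
    (hN1 : ∀ v x a, ρ.ρ (i v) (i (N1 x)) (t a) = 0) (x1 x2 : g) (a : h) :
    ρ.ρ (s x1 - i (N1 x1)) (s x2 - i (N1 x2)) (t a - j (N2 a)) =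
      ρ.ρ (s x1) (s x2) (t a) - ρ.ρ (s x1) (s x2) (j (N2 a))
        - ρ.ρ (i (N1 x1)) (s x2) (t a) + ρ.ρ (i (N1 x2)) (s x1) (t a) := by
  simp only [map_sub, LinearMap.sub_apply, hij, hN1, hN2]
  linear_combination (norm := module) -ρ.ρ_swap (s x1) (i (N1 x2)) (t a)
    + ρ.ρ_swap (s x1) (i (N1 x2)) (j (N2 a)) - hN2 (N1 x2) x1 a

end ShiftedSection

section FieldLinearAlgebra

variable {k G g V T : Type*} [Field k] [AddCommGroup G] [Module k G]
  [AddCommGroup g] [Module k g] [AddCommGroup V] [Module k V] [AddCommGroup T] [Module k T]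

lemma exists_linearMap_apply_eq_of_notMem_span {x y : g} (hx : x ∉ k ∙ y) (u : V) :
    ∃ K : g →ₗ[k] V, K x = u ∧ K y = 0 := by
  obtain ⟨f, hfx, hf⟩ := Submodule.exists_dual_map_eq_bot_of_notMem hx inferInstance
  have hfy : f y ∈ (k ∙ y).map f :=
    Submodule.mem_map_of_mem (Submodule.mem_span_singleton_self y)
  rw [hf, Submodule.mem_bot] at hfy
  exact ⟨((f x)⁻¹ • f).smulRight u, by simp [inv_mul_cancel₀ hfx], by simp [hfy]⟩

lemma LinearMap.trilinear_comp_eq_zero (B : V →ₗ[k] g →ₗ[k] V →ₗ[k] T)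
    (h_alt : ∀ v y, B v y v = 0) (h_comm : ∀ (K : g →ₗ[k] V) x y v, B (K x) y v = B (K y) x v)
    (N : g →ₗ[k] V) (x y z : g) : B (N x) y (N z) = 0 := by
  have h_skew : ∀ u v y, B u y v = -B v y u := fun u v y => by
    have h := h_alt (u + v) y
    simp only [map_add, LinearMap.add_apply, h_alt, zero_add, add_zero] at h
    exact eq_neg_of_add_eq_zero_right h
  have h_off_line : ∀ x v, x ∉ k ∙ y → B (N x) y v = 0 := fun x v hx => by
    obtain ⟨K, hKx, hKy⟩ := exists_linearMap_apply_eq_of_notMem_span hx (N x)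
    rw [← hKx, h_comm, hKy, map_zero, LinearMap.zero_apply, LinearMap.zero_apply]
  by_cases hx : x ∈ k ∙ y
  · by_cases hz : z ∈ k ∙ y
    · obtain ⟨a, rfl⟩ := Submodule.mem_span_singleton.mp hx
      obtain ⟨b, rfl⟩ := Submodule.mem_span_singleton.mp hz
      simp [h_alt]
    · rw [h_skew, h_off_line z _ hz, neg_zero]
  · exact h_off_line x _ hx

lemma ThreeLie.br_comp_section_comp_eq_zero (L : ThreeLie k G) (i : V →ₗ[k] G)
    (s : g →ₗ[k] G) (hi : ∀ u v w, L.br (i u) (i v) (i w) = 0)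
    (hs : ∀ (K : g →ₗ[k] V) x1 x2 v,
      L.br (s x1 + i (K x1)) (s x2 + i (K x2)) (i v) = L.br (s x1) (s x2) (i v))
    (N : g →ₗ[k] V) (x y z : g) : L.br (i (N x)) (s y) (i (N z)) = 0 := by
  refine LinearMap.trilinear_comp_eq_zero ((L.br.compl₁₂ i s).compr₂ (LinearMap.lcomp k G i))
    (fun v y => ?_) (fun K x1 x2 v => ?_) N x y z
  · simp only [LinearMap.compr₂_apply, LinearMap.compl₁₂_apply, LinearMap.lcomp_apply]
    rw [L.br_swap_right, L.alt₁, neg_zero]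
  · have h := hs K x1 x2 v
    simp only [map_add, LinearMap.add_apply, hi, add_zero] at h
    simp only [LinearMap.compr₂_apply, LinearMap.compl₁₂_apply, LinearMap.lcomp_apply]
    linear_combination (norm := module) h - L.br_swap_left (s x1) (i (K x2)) (i v)

end FieldLinearAlgebra

lemma LinearMap.exists_comp_eq_of_forall_mem_range {k g G V : Type*} [CommRing k]
    [AddCommGroup g] [Module k g] [AddCommGroup G] [Module k G] [AddCommGroup V] [Module k V]
    {i : V →ₗ[k] G} (hi : Function.Injective i) {d : g →ₗ[k] G}
    (hd : ∀ x, d x ∈ LinearMap.range i) : ∃ N : g →ₗ[k] V, ∀ x, i (N x) = d x :=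
  ⟨(LinearEquiv.ofInjective i hi).symm.toLinearMap ∘ₗ d.codRestrict _ hd, fun x => by simp⟩

section Extension

variable {k g h V W ghat hhat : Type*} [CommRing k]
  [AddCommGroup g] [Module k g] [AddCommGroup h] [Module k h]
  [AddCommGroup V] [Module k V] [AddCommGroup W] [Module k W]
  [AddCommGroup ghat] [Module k ghat] [AddCommGroup hhat] [Module k hhat]
  {M : MatchedPair k g h} {E : AbelianExt k g h V W ghat hhat M}
  {s1 s1' : g →ₗ[k] ghat} {s2 s2' : h →ₗ[k] hhat}

lemma IsSection.add_comp (hs : IsSection E s1 s2) (K1 : g →ₗ[k] V) (K2 : h →ₗ[k] W) :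
    IsSection E (s1 + E.i1 ∘ₗ K1) (s2 + E.i2 ∘ₗ K2) :=
  ⟨fun x => by simp [hs.1 x, (E.exact1 _).mpr ⟨_, rfl⟩],
    fun a => by simp [hs.2 a, (E.exact2 _).mpr ⟨_, rfl⟩]⟩

lemma IsSection.exists_eq_sub_i1 (hs : IsSection E s1 s2) (hs' : IsSection E s1' s2') :
    ∃ N1 : g →ₗ[k] V, ∀ x, s1' x = s1 x - E.i1 (N1 x) := by
  obtain ⟨N1, hN1⟩ := LinearMap.exists_comp_eq_of_forall_mem_range E.i1_inj (d := s1 - s1')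
    fun x => (E.exact1 _).mp (by simp [hs.1 x, hs'.1 x])
  exact ⟨N1, fun x => by simp [hN1]⟩

lemma IsSection.exists_eq_sub_i2 (hs : IsSection E s1 s2) (hs' : IsSection E s1' s2') :
    ∃ N2 : h →ₗ[k] W, ∀ a, s2' a = s2 a - E.i2 (N2 a) := by
  obtain ⟨N2, hN2⟩ := LinearMap.exists_comp_eq_of_forall_mem_range E.i2_inj (d := s2 - s2')
    fun a => (E.exact2 _).mp (by simp [hs.2 a, hs'.2 a])
  exact ⟨N2, fun a => by simp [hN2]⟩

namespace IsInducedRep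

variable {R : MPRepData k g h V W}

lemma rho_i1_section_i2_eq_zero (hR : IsInducedRep E R) (hs : IsSection E s1 s2)
    (K : h →ₗ[k] W) (v : V) (x : g) (a : h) :
    E.Mhat.ρ.ρ (E.i1 v) (s1 x) (E.i2 (K a)) = 0 := by
  have hK := (hR _ _ (hs.add_comp 0 K)).2.2.2.2.1 v x a
  simp only [LinearMap.add_apply, LinearMap.comp_apply, LinearMap.zero_apply, map_zero,
    add_zero, map_add, ← (hR s1 s2 hs).2.2.2.2.1] at hK
  exact left_eq_add.mp hK

lemma rho_i1_i1_section_eq_zero (hR : IsInducedRep E R) (hs : IsSection E s1 s2)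
    (K : g →ₗ[k] V) (v : V) (x : g) (a : h) :
    E.Mhat.ρ.ρ (E.i1 v) (E.i1 (K x)) (s2 a) = 0 := by
  have hK := (hR _ _ (hs.add_comp K 0)).2.2.2.2.1 v x a
  simp only [LinearMap.add_apply, LinearMap.comp_apply, LinearMap.zero_apply, map_zero,
    add_zero, map_add, ← (hR s1 s2 hs).2.2.2.2.1] at hK
  exact left_eq_add.mp hK

lemma psi_i2_section_i1_eq_zero (hR : IsInducedRep E R) (hs : IsSection E s1 s2)
    (K : g →ₗ[k] V) (w : W) (a : h) (x : g) :
    E.Mhat.ψ.ρ (E.i2 w) (s2 a) (E.i1 (K x)) = 0 := by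
  have hK := (hR _ _ (hs.add_comp K 0)).2.2.2.2.2 w a x
  simp only [LinearMap.add_apply, LinearMap.comp_apply, LinearMap.zero_apply, map_zero,
    add_zero, map_add, ← (hR s1 s2 hs).2.2.2.2.2] at hK
  exact left_eq_add.mp hK

lemma psi_i2_i2_section_eq_zero (hR : IsInducedRep E R) (hs : IsSection E s1 s2)
    (K : h →ₗ[k] W) (w : W) (a : h) (x : g) :
    E.Mhat.ψ.ρ (E.i2 w) (E.i2 (K a)) (s1 x) = 0 := by
  have hK := (hR _ _ (hs.add_comp 0 K)).2.2.2.2.2 w a x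
  simp only [LinearMap.add_apply, LinearMap.comp_apply, LinearMap.zero_apply, map_zero,
    add_zero, map_add, ← (hR s1 s2 hs).2.2.2.2.2] at hK
  exact left_eq_add.mp hK

end IsInducedRep

end Extension

section Cocycle

variable {k g h V W ghat hhat : Type*} [CommRing k]
  [AddCommGroup g] [Module k g] [AddCommGroup h] [Module k h]
  [AddCommGroup V] [Module k V] [AddCommGroup W] [Module k W]
  [AddCommGroup ghat] [Module k ghat] [AddCommGroup hhat] [Module k hhat]
  {M : MatchedPair k g h} {E : AbelianExt k g h V W ghat hhat M}
  {s1 : g →ₗ[k] ghat} {s2 : h →ₗ[k] hhat} {R : MPRepData k g h V W}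
  {c : Cochain2 k g h V W}

namespace IsExtCocycle

lemma cocycle_of_fund_Lg (hR : IsInducedRep E R) (hs : IsSection E s1 s2)
    (hc : IsExtCocycle E s1 s2 c) (x1 x2 x3 x4 x5 : g) :
    R.ρV x4 x5 (c.ω x1 x2 x3) + R.ρV x5 x3 (c.ω x1 x2 x4) + R.ρV x3 x4 (c.ω x1 x2 x5)
      + c.ω (M.Lg.br x1 x2 x3) x4 x5 + c.ω x3 (M.Lg.br x1 x2 x4) x5
      + c.ω x3 x4 (M.Lg.br x1 x2 x5)
      - R.ρV x1 x2 (c.ω x3 x4 x5) - c.ω x1 x2 (M.Lg.br x3 x4 x5) = 0 := by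
  apply E.i1_inj
  simp only [map_add, map_sub, map_zero, (hR s1 s2 hs).1, hc.1]
  have H := congrArg s1 (M.Lg.fund x1 x2 x3 x4 x5)
  simp only [map_add] at H
  linear_combination (norm := module) H - E.Mhat.Lg.fund (s1 x1) (s1 x2) (s1 x3) (s1 x4) (s1 x5)
    - E.Mhat.Lg.br_rotate (E.Mhat.Lg.br (s1 x1) (s1 x2) (s1 x3)) (s1 x4) (s1 x5)
    + E.Mhat.Lg.br_rotate (s1 x5) (s1 x3) (E.Mhat.Lg.br (s1 x1) (s1 x2) (s1 x4))
    + E.Mhat.Lg.br_rotate (s1 (M.Lg.br x1 x2 x3)) (s1 x4) (s1 x5)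
    - E.Mhat.Lg.br_rotate (s1 x5) (s1 x3) (s1 (M.Lg.br x1 x2 x4))

lemma cocycle_of_mp4 (hR : IsInducedRep E R) (hs : IsSection E s1 s2)
    (hc : IsExtCocycle E s1 s2 c) (x1 x2 : g) (a1 a2 a3 : h) :
    R.ψW a2 a3 (c.ν x1 x2 a1) + R.ψW a3 a1 (c.ν x1 x2 a2) + R.ψW a1 a2 (c.ν x1 x2 a3)
      + c.θ (M.ρ.ρ x1 x2 a1) a2 a3 + c.θ a1 (M.ρ.ρ x1 x2 a2) a3 + c.θ a1 a2 (M.ρ.ρ x1 x2 a3)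
      - R.ρW x1 x2 (c.θ a1 a2 a3) - c.ν x1 x2 (M.Lh.br a1 a2 a3) = 0 := by
  apply E.i2_inj
  simp only [map_add, map_sub, map_zero, (hR s1 s2 hs).2.1, (hR s1 s2 hs).2.2.2.1, hc.2.1,
    hc.2.2.1]
  have H := congrArg s2 (M.mp4 x1 x2 a1 a2 a3)
  simp only [map_add] at H
  linear_combination (norm := module) H - E.Mhat.mp4 (s1 x1) (s1 x2) (s2 a1) (s2 a2) (s2 a3)
    - E.Mhat.Lh.br_rotate (E.Mhat.ρ.ρ (s1 x1) (s1 x2) (s2 a1)) (s2 a2) (s2 a3)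
    + E.Mhat.Lh.br_rotate (s2 a3) (s2 a1) (E.Mhat.ρ.ρ (s1 x1) (s1 x2) (s2 a2))
    + E.Mhat.Lh.br_rotate (s2 (M.ρ.ρ x1 x2 a1)) (s2 a2) (s2 a3)
    - E.Mhat.Lh.br_rotate (s2 a3) (s2 a1) (s2 (M.ρ.ρ x1 x2 a2))

lemma cocycle_of_mp1 (hR : IsInducedRep E R) (hs : IsSection E s1 s2)
    (hc : IsExtCocycle E s1 s2 c) (a1 a2 : h) (x1 x2 x3 : g) :
    R.ρV x2 x3 (c.φ a1 a2 x1) + R.ρV x3 x1 (c.φ a1 a2 x2) + R.ρV x1 x2 (c.φ a1 a2 x3)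
      + c.ω (M.ψ.ρ a1 a2 x1) x2 x3 + c.ω x1 (M.ψ.ρ a1 a2 x2) x3 + c.ω x1 x2 (M.ψ.ρ a1 a2 x3)
      - R.ψV a1 a2 (c.ω x1 x2 x3) - c.φ a1 a2 (M.Lg.br x1 x2 x3) = 0 := by
  apply E.i1_inj
  simp only [map_add, map_sub, map_zero, (hR s1 s2 hs).1, (hR s1 s2 hs).2.2.1, hc.1,
    hc.2.2.2]
  have H := congrArg s1 (M.mp1 a1 a2 x1 x2 x3)
  simp only [map_add] at H
  linear_combination (norm := module) H - E.Mhat.mp1 (s2 a1) (s2 a2) (s1 x1) (s1 x2) (s1 x3)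
    - E.Mhat.Lg.br_rotate (E.Mhat.ψ.ρ (s2 a1) (s2 a2) (s1 x1)) (s1 x2) (s1 x3)
    + E.Mhat.Lg.br_rotate (s1 x3) (s1 x1) (E.Mhat.ψ.ρ (s2 a1) (s2 a2) (s1 x2))
    + E.Mhat.Lg.br_rotate (s1 (M.ψ.ρ a1 a2 x1)) (s1 x2) (s1 x3)
    - E.Mhat.Lg.br_rotate (s1 x3) (s1 x1) (s1 (M.ψ.ρ a1 a2 x2))

lemma cocycle_of_mp2 (hR : IsInducedRep E R) (hs : IsSection E s1 s2)
    (hc : IsExtCocycle E s1 s2 c) (x1 x2 x3 : g) (a1 a2 : h) :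
    R.B (c.ν x1 x3 a2) a1 x2 + c.φ (M.ρ.ρ x1 x3 a2) a1 x2
      - R.B (c.ν x2 x3 a2) a1 x1 - c.φ (M.ρ.ρ x2 x3 a2) a1 x1
      + R.ρV x1 x2 (c.φ a1 a2 x3) + c.ω x1 x2 (M.ψ.ρ a1 a2 x3)
      - R.B (c.ν x1 x2 a1) a2 x3 - c.φ (M.ρ.ρ x1 x2 a1) a2 x3 = 0 := by
  apply E.i1_inj
  simp only [map_add, map_sub, map_zero, (hR s1 s2 hs).1, (hR s1 s2 hs).2.2.2.2.2, hc.1,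
    hc.2.2.1, hc.2.2.2, LinearMap.sub_apply]
  have H := congrArg s1 (M.mp2 x1 x2 x3 a1 a2)
  simp only [map_add, map_sub] at H
  linear_combination (norm := module) H - E.Mhat.mp2 (s1 x1) (s1 x2) (s1 x3) (s2 a1) (s2 a2)

lemma cocycle_of_mp5 (hR : IsInducedRep E R) (hs : IsSection E s1 s2)
    (hc : IsExtCocycle E s1 s2 c) (a1 a2 a3 : h) (x1 x2 : g) :
    R.A (c.φ a1 a3 x2) x1 a2 + c.ν (M.ψ.ρ a1 a3 x2) x1 a2
      - R.A (c.φ a2 a3 x2) x1 a1 - c.ν (M.ψ.ρ a2 a3 x2) x1 a1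
      + R.ψW a1 a2 (c.ν x1 x2 a3) + c.θ a1 a2 (M.ρ.ρ x1 x2 a3)
      - R.A (c.φ a1 a2 x1) x2 a3 - c.ν (M.ψ.ρ a1 a2 x1) x2 a3 = 0 := by
  apply E.i2_inj
  simp only [map_add, map_sub, map_zero, (hR s1 s2 hs).2.2.2.1, (hR s1 s2 hs).2.2.2.2.1,
    hc.2.1, hc.2.2.1, hc.2.2.2, LinearMap.sub_apply]
  have H := congrArg s2 (M.mp5 a1 a2 a3 x1 x2)
  simp only [map_add, map_sub] at H
  linear_combination (norm := module) H - E.Mhat.mp5 (s2 a1) (s2 a2) (s2 a3) (s1 x1) (s1 x2)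

lemma cocycle_of_mp3 (hR : IsInducedRep E R) (hs : IsSection E s1 s2)
    (hc : IsExtCocycle E s1 s2 c) (a1 a2 : h) (x1 x2 x3 : g) :
    R.ψV a1 a2 (c.ω x1 x2 x3) + c.φ a1 a2 (M.Lg.br x1 x2 x3)
      + c.φ (M.ρ.ρ x2 x3 a1) a2 x1 + R.B (c.ν x2 x3 a1) a2 x1
      + c.φ a1 (M.ρ.ρ x2 x3 a2) x1 - R.B (c.ν x2 x3 a2) a1 x1
      - c.ω (M.ψ.ρ a1 a2 x1) x2 x3 - R.ρV x2 x3 (c.φ a1 a2 x1) = 0 := by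
  apply E.i1_inj
  simp only [map_add, map_sub, map_zero, (hR s1 s2 hs).1, (hR s1 s2 hs).2.2.1,
    (hR s1 s2 hs).2.2.2.2.2, hc.1, hc.2.2.1, hc.2.2.2, LinearMap.sub_apply]
  have H := congrArg s1 (M.mp3 a1 a2 x1 x2 x3)
  simp only [map_add] at H
  linear_combination (norm := module) H - E.Mhat.mp3 (s2 a1) (s2 a2) (s1 x1) (s1 x2) (s1 x3)
    + E.Mhat.ψ.ρ_swap (s2 a1) (s2 (M.ρ.ρ x2 x3 a2)) (s1 x1)
    - E.Mhat.ψ.ρ_swap (s2 a1) (E.Mhat.ρ.ρ (s1 x2) (s1 x3) (s2 a2)) (s1 x1)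
    - E.Mhat.Lg.br_rotate (s1 (M.ψ.ρ a1 a2 x1)) (s1 x2) (s1 x3)
    + E.Mhat.Lg.br_rotate (E.Mhat.ψ.ρ (s2 a1) (s2 a2) (s1 x1)) (s1 x2) (s1 x3)

lemma cocycle_of_mp6 (hR : IsInducedRep E R) (hs : IsSection E s1 s2)
    (hc : IsExtCocycle E s1 s2 c) (x1 x2 : g) (a1 a2 a3 : h) :
    R.ρW x1 x2 (c.θ a1 a2 a3) + c.ν x1 x2 (M.Lh.br a1 a2 a3)
      + c.ν (M.ψ.ρ a2 a3 x1) x2 a1 + R.A (c.φ a2 a3 x1) x2 a1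
      + c.ν x1 (M.ψ.ρ a2 a3 x2) a1 - R.A (c.φ a2 a3 x2) x1 a1
      - c.θ (M.ρ.ρ x1 x2 a1) a2 a3 - R.ψW a2 a3 (c.ν x1 x2 a1) = 0 := by
  apply E.i2_inj
  simp only [map_add, map_sub, map_zero, (hR s1 s2 hs).2.1, (hR s1 s2 hs).2.2.2.1,
    (hR s1 s2 hs).2.2.2.2.1, hc.2.1, hc.2.2.1, hc.2.2.2, LinearMap.sub_apply]
  have H := congrArg s2 (M.mp6 x1 x2 a1 a2 a3)
  simp only [map_add] at H
  linear_combination (norm := module) H - E.Mhat.mp6 (s1 x1) (s1 x2) (s2 a1) (s2 a2) (s2 a3)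
    + E.Mhat.ρ.ρ_swap (s1 x1) (s1 (M.ψ.ρ a2 a3 x2)) (s2 a1)
    - E.Mhat.ρ.ρ_swap (s1 x1) (E.Mhat.ψ.ρ (s2 a2) (s2 a3) (s1 x2)) (s2 a1)
    - E.Mhat.Lh.br_rotate (s2 (M.ρ.ρ x1 x2 a1)) (s2 a2) (s2 a3)
    + E.Mhat.Lh.br_rotate (E.Mhat.ρ.ρ (s1 x1) (s1 x2) (s2 a1)) (s2 a2) (s2 a3)

lemma cocycle_of_fund_Lh (hR : IsInducedRep E R) (hs : IsSection E s1 s2)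
    (hc : IsExtCocycle E s1 s2 c) (a1 a2 a3 a4 a5 : h) :
    R.ψW a4 a5 (c.θ a1 a2 a3) + R.ψW a5 a3 (c.θ a1 a2 a4) + R.ψW a3 a4 (c.θ a1 a2 a5)
      + c.θ (M.Lh.br a1 a2 a3) a4 a5 + c.θ a3 (M.Lh.br a1 a2 a4) a5
      + c.θ a3 a4 (M.Lh.br a1 a2 a5)
      - R.ψW a1 a2 (c.θ a3 a4 a5) - c.θ a1 a2 (M.Lh.br a3 a4 a5) = 0 := by
  apply E.i2_inj
  simp only [map_add, map_sub, map_zero, (hR s1 s2 hs).2.2.2.1, hc.2.1]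
  have H := congrArg s2 (M.Lh.fund a1 a2 a3 a4 a5)
  simp only [map_add] at H
  linear_combination (norm := module) H - E.Mhat.Lh.fund (s2 a1) (s2 a2) (s2 a3) (s2 a4) (s2 a5)
    - E.Mhat.Lh.br_rotate (E.Mhat.Lh.br (s2 a1) (s2 a2) (s2 a3)) (s2 a4) (s2 a5)
    + E.Mhat.Lh.br_rotate (s2 a5) (s2 a3) (E.Mhat.Lh.br (s2 a1) (s2 a2) (s2 a4))
    + E.Mhat.Lh.br_rotate (s2 (M.Lh.br a1 a2 a3)) (s2 a4) (s2 a5)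
    - E.Mhat.Lh.br_rotate (s2 a5) (s2 a3) (s2 (M.Lh.br a1 a2 a4))

lemma isCocycle2 (hR : IsInducedRep E R) (hs : IsSection E s1 s2)
    (hc : IsExtCocycle E s1 s2 c) : IsCocycle2 M R c :=
  ⟨hc.cocycle_of_fund_Lg hR hs, hc.cocycle_of_mp4 hR hs, hc.cocycle_of_mp1 hR hs,
    hc.cocycle_of_mp2 hR hs, hc.cocycle_of_mp5 hR hs, hc.cocycle_of_mp3 hR hs,
    hc.cocycle_of_mp6 hR hs, hc.cocycle_of_fund_Lh hR hs⟩

end IsExtCocycle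

end Cocycle

section FieldExtension

variable {k g h V W ghat hhat : Type*} [Field k]
  [AddCommGroup g] [Module k g] [AddCommGroup h] [Module k h]
  [AddCommGroup V] [Module k V] [AddCommGroup W] [Module k W]
  [AddCommGroup ghat] [Module k ghat] [AddCommGroup hhat] [Module k hhat]
  {M : MatchedPair k g h} {E : AbelianExt k g h V W ghat hhat M}
  {s1 s1' : g →ₗ[k] ghat} {s2 s2' : h →ₗ[k] hhat} {R : MPRepData k g h V W}
  {c c' : Cochain2 k g h V W}

lemma IsInducedRep.lg_i1_section_i1_eq_zero (hR : IsInducedRep E R) (hs : IsSection E s1 s2)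
    (N : g →ₗ[k] V) (x y z : g) : E.Mhat.Lg.br (E.i1 (N x)) (s1 y) (E.i1 (N z)) = 0 :=
  E.Mhat.Lg.br_comp_section_comp_eq_zero E.i1 s1 E.i1_br (fun K x1 x2 v => by
    have hK := (hR _ _ (hs.add_comp K 0)).1 x1 x2 v
    simp only [LinearMap.add_apply, LinearMap.comp_apply] at hK
    exact hK.symm.trans ((hR s1 s2 hs).1 x1 x2 v)) N x y z

lemma IsInducedRep.lh_i2_section_i2_eq_zero (hR : IsInducedRep E R) (hs : IsSection E s1 s2)
    (N : h →ₗ[k] W) (a b c : h) : E.Mhat.Lh.br (E.i2 (N a)) (s2 b) (E.i2 (N c)) = 0 :=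
  E.Mhat.Lh.br_comp_section_comp_eq_zero E.i2 s2 E.i2_br (fun K a1 a2 w => by
    have hK := (hR _ _ (hs.add_comp 0 K)).2.2.2.1 a1 a2 w
    simp only [LinearMap.add_apply, LinearMap.comp_apply] at hK
    exact hK.symm.trans ((hR s1 s2 hs).2.2.2.1 a1 a2 w)) N a b c

lemma IsExtCocycle.cohomologous (hR : IsInducedRep E R) (hs : IsSection E s1 s2)
    (hc : IsExtCocycle E s1 s2 c) (hs' : IsSection E s1' s2') (hc' : IsExtCocycle E s1' s2' c') :
    Cohomologous M R c c' := by
  obtain ⟨N1, hN1⟩ := hs.exists_eq_sub_i1 hs'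
  obtain ⟨N2, hN2⟩ := hs.exists_eq_sub_i2 hs'
  obtain ⟨hρV, hρW, hψV, hψW, hA, hB⟩ := hR s1 s2 hs
  refine ⟨N1, N2, fun x1 x2 x3 => E.i1_inj ?_, fun x1 x2 a => E.i2_inj ?_,
    fun a1 a2 x => E.i1_inj ?_, fun a1 a2 a3 => E.i2_inj ?_⟩
  · rw [show (c - c').ω x1 x2 x3 = c.ω x1 x2 x3 - c'.ω x1 x2 x3 from rfl, map_sub, hc.1,
      hc'.1]
    simp only [hN1]
    rw [E.Mhat.Lg.br_shifted_section E.i1 s1 N1 E.i1_br (hR.lg_i1_section_i1_eq_zero hs N1)]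
    simp only [map_add, map_sub, hρV]
    abel
  · rw [show (c - c').ν x1 x2 a = c.ν x1 x2 a - c'.ν x1 x2 a from rfl, map_sub, hc.2.2.1,
      hc'.2.2.1]
    simp only [hN1, hN2]
    rw [E.Mhat.ρ.ρ_shifted_section E.i1 E.i2 s1 s2 N1 N2 E.i_rho
      (hR.rho_i1_section_i2_eq_zero hs N2) (hR.rho_i1_i1_section_eq_zero hs N1)]
    simp only [map_add, map_sub, hρW, hA]
    abel
  · rw [show (c - c').φ a1 a2 x = c.φ a1 a2 x - c'.φ a1 a2 x from rfl, map_sub, hc.2.2.2,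
      hc'.2.2.2]
    simp only [hN1, hN2]
    rw [E.Mhat.ψ.ρ_shifted_section E.i2 E.i1 s2 s1 N2 N1 E.i_psi
      (hR.psi_i2_section_i1_eq_zero hs N1) (hR.psi_i2_i2_section_eq_zero hs N2)]
    simp only [map_add, map_sub, hψV, hB]
    abel
  · rw [show (c - c').θ a1 a2 a3 = c.θ a1 a2 a3 - c'.θ a1 a2 a3 from rfl, map_sub, hc.2.1,
      hc'.2.1]
    simp only [hN2]
    rw [E.Mhat.Lh.br_shifted_section E.i2 s2 N2 E.i2_br (hR.lh_i2_section_i2_eq_zero hs N2)]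
    simp only [map_add, map_sub, hψW]
    abel

end FieldExtension

namespace IsExtIso

variable {k g h V W ghat hhat ghat' hhat' : Type*} [CommRing k]
  [AddCommGroup g] [Module k g] [AddCommGroup h] [Module k h]
  [AddCommGroup V] [Module k V] [AddCommGroup W] [Module k W]
  [AddCommGroup ghat] [Module k ghat] [AddCommGroup hhat] [Module k hhat]
  [AddCommGroup ghat'] [Module k ghat'] [AddCommGroup hhat'] [Module k hhat']
  {M : MatchedPair k g h} {E : AbelianExt k g h V W ghat hhat M}
  {E' : AbelianExt k g h V W ghat' hhat' M} {f : ghat →ₗ[k] ghat'} {gm : hhat →ₗ[k] hhat'}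

lemma symm (hf : IsExtIso E E' f gm) :
    IsExtIso E' E (LinearEquiv.ofBijective f hf.1).symm.toLinearMap
      (LinearEquiv.ofBijective gm hf.2.1).symm.toLinearMap := by
  obtain ⟨hfb, hgb, hbr, hbr', hρ, hψ, hi1, hi2, hj1, hj2⟩ := hf
  set fe := LinearEquiv.ofBijective f hfb
  set ge := LinearEquiv.ofBijective gm hgb
  refine ⟨fe.symm.bijective, ge.symm.bijective, fun X Y Z => fe.injective ?_,
    fun A B C => ge.injective ?_, fun X Y A => ge.injective ?_, fun A B X => fe.injective ?_,
    fun v => fe.injective ?_, fun w => ge.injective ?_, fun X => ?_, fun A => ?_⟩ <;>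
    simp [fe, ge, hbr, hbr', hρ, hψ, hi1, hi2, ← hj1, ← hj2]

lemma isSection_comp (hf : IsExtIso E E' f gm) {s1 : g →ₗ[k] ghat} {s2 : h →ₗ[k] hhat}
    (hs : IsSection E s1 s2) : IsSection E' (f ∘ₗ s1) (gm ∘ₗ s2) := by
  obtain ⟨-, -, -, -, -, -, -, -, hj1, hj2⟩ := hf
  exact ⟨fun x => by simp [hj1, hs.1 x], fun a => by simp [hj2, hs.2 a]⟩

lemma isExtCocycle_comp (hf : IsExtIso E E' f gm) {s1 : g →ₗ[k] ghat} {s2 : h →ₗ[k] hhat}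
    {c : Cochain2 k g h V W} (hc : IsExtCocycle E s1 s2 c) :
    IsExtCocycle E' (f ∘ₗ s1) (gm ∘ₗ s2) c := by
  obtain ⟨-, -, hbr, hbr', hρ, hψ, hi1, hi2, -, -⟩ := hf
  refine ⟨fun x1 x2 x3 => ?_, fun a1 a2 a3 => ?_, fun x1 x2 a => ?_, fun a1 a2 x => ?_⟩
  · rw [← hi1, hc.1, map_sub, hbr]; rfl
  · rw [← hi2, hc.2.1, map_sub, hbr']; rfl
  · rw [← hi2, hc.2.2.1, map_sub, hρ]; rfl
  · rw [← hi1, hc.2.2.2, map_sub, hψ]; rfl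

end IsExtIso

/-- The quadruple associated to an abelian extension of a
matched pair of 3-Lie algebras and a section is a 2-cocycle with coefficients in
the induced representation; its cohomology class does not depend on the choice
of the section, and isomorphic abelian extensions determine the same class. -/
theorem extension_cocycle_well_defined
    {k : Type*} [Field k] {g h V W ghat hhat : Type*}
    [AddCommGroup g] [Module k g] [AddCommGroup h] [Module k h]
    [AddCommGroup V] [Module k V] [AddCommGroup W] [Module k W]
    [AddCommGroup ghat] [Module k ghat] [AddCommGroup hhat] [Module k hhat]
    {M : MatchedPair k g h} (E : AbelianExt k g h V W ghat hhat M)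
    (s1 : g →ₗ[k] ghat) (s2 : h →ₗ[k] hhat) (hs : IsSection E s1 s2)
    (R : MPRep (V := V) (W := W) M) (hR : IsInducedRep E R.toData)
    (c : Cochain2 k g h V W) (hc : IsExtCocycle E s1 s2 c) :
    -- (a) it is a 2-cocycle
    IsCocycle2 M R.toData c ∧
    -- (b) the class is independent of the section
    (∀ (s1' : g →ₗ[k] ghat) (s2' : h →ₗ[k] hhat), IsSection E s1' s2' →
      ∀ c' : Cochain2 k g h V W, IsExtCocycle E s1' s2' c' →
        Cohomologous M R.toData c c') ∧
    -- (c) isomorphic abelian extensions determine the same class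
    (∀ (ghat' : Type u₁) (hhat' : Type u₂)
      [AddCommGroup ghat'] [Module k ghat'] [AddCommGroup hhat'] [Module k hhat']
      (E' : AbelianExt k g h V W ghat' hhat' M)
      (f : ghat →ₗ[k] ghat') (gm : hhat →ₗ[k] hhat'), IsExtIso E E' f gm →
      ∀ (s1'' : g →ₗ[k] ghat') (s2'' : h →ₗ[k] hhat'), IsSection E' s1'' s2'' →
        ∀ c'' : Cochain2 k g h V W, IsExtCocycle E' s1'' s2'' c'' →
          Cohomologous M R.toData c c'') := by
  refine ⟨hc.isCocycle2 hR hs, fun s1' s2' hs' c' hc' => hc.cohomologous hR hs hs' hc', ?_⟩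
  intro ghat' hhat' _ _ _ _ E' f gm hf s1'' s2'' hs'' c'' hc''
  exact hc.cohomologous hR hs (hf.symm.isSection_comp hs'') (hf.symm.isExtCocycle_comp hc'')
end
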